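/- Suppose u : B(x,r) → ℝ is continuous, equals a on two line segments emanating from x that meet at angle θ ≤ π/2, with u > a strictly inside the sector of angle θ between them and u < a outside on the rest of a small circle ∂B(x,ρ). Then for small ρ > 0, the arclength measure of {s ∈ ∂B(x,ρ) : u(s) > a} is at most θρ < πρ, so the median of u over ∂B(x,ρ) is strictly less than a; in particular u cannot satisfy u(x) = a = med_{∂B(x,ρ)} u. -/

import Mathlib

/-!
Every superlevel set `{m ≤ u}` with `m ≥ a` on the circle avoids the open arc where `u < a`,
so, measured over any period `(β, β + 2π]`, it has length at most `θ < π`. Translation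
invariance of Lebesgue measure moves this bound to the period `(0, 2π]` used by
`IsCircleMedian`, where a median would need length at least `π`.
-/

open MeasureTheory Set Metric Real Filter Topology

/-- `m` is a median of `u` over the circle `∂B(x,r)` with respect to arclength measure,
parametrized by `θ ↦ x + r e^{iθ}`. -/
def IsCircleMedian (x : ℂ) (r : ℝ) (u : ℂ → ℝ) (m : ℝ) : Prop :=
  volume (Ioc (0:ℝ) (2*π)) / 2 ≤ volume {θ ∈ Ioc (0:ℝ) (2*π) | m ≤ u (circleMap x r θ)} ∧
  volume (Ioc (0:ℝ) (2*π)) / 2 ≤ volume {θ ∈ Ioc (0:ℝ) (2*π) | u (circleMap x r θ) ≤ m}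

/-- `u` has the local median value property on `Ω`. -/
def HasLMVP (Ω : Set ℂ) (u : ℂ → ℝ) : Prop :=
  ∃ R : ℂ → ℝ, ContinuousOn R Ω ∧
    (∀ x ∈ Ω, 0 < R x ∧ R x ≤ Metric.infDist x Ωᶜ) ∧
    (∀ x ∈ Ω, ∀ r : ℝ, 0 < r → r ≤ R x → IsCircleMedian x r u (u x))

theorem Function.Periodic.volume_preimage_inter_Ioc_eq {α : Type*} [MeasurableSpace α]
    {f : ℝ → α} {T : ℝ} (hf : Function.Periodic f T) (hT : 0 < T) (hfm : Measurable f)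
    {s : Set α} (hs : MeasurableSet s) (a b : ℝ) :
    volume {ψ ∈ Ioc a (a + T) | f ψ ∈ s} = volume {ψ ∈ Ioc b (b + T) | f ψ ∈ s} := by
  have hinv : ∀ g : AddSubgroup.zmultiples T, (g +ᵥ ·) ⁻¹' (f ⁻¹' s) = f ⁻¹' s := by
    rintro ⟨_, k, rfl⟩
    ext ψ
    simp only [mem_preimage, AddSubgroup.vadd_def, vadd_eq_add, add_comm _ ψ, hf.zsmul k ψ]
  have hshift := (isAddFundamentalDomain_Ioc hT a).measure_set_eq (isAddFundamentalDomain_Ioc hT b)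
    (hfm hs) hinv
  rwa [inter_comm, inter_comm (f ⁻¹' s)] at hshift

theorem volume_sep_Ioc_le_of_forall_Ioo_not {p : ℝ → Prop} {b θ T : ℝ}
    (hp : ∀ ψ ∈ Ioo (b + θ) (b + T), ¬ p ψ) :
    volume {ψ ∈ Ioc b (b + T) | p ψ} ≤ ENNReal.ofReal θ := by
  have hsub : {ψ ∈ Ioc b (b + T) | p ψ} ⊆ Ioc b (b + θ) ∪ {b + T} := by
    rintro ψ ⟨⟨hbψ, hψT⟩, hpψ⟩
    rcases hψT.eq_or_lt with rfl | hψT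
    · exact Or.inr rfl
    · exact Or.inl ⟨hbψ, not_lt.1 fun hθψ => hp ψ ⟨hθψ, hψT⟩ hpψ⟩
  calc volume {ψ ∈ Ioc b (b + T) | p ψ}
      ≤ volume (Ioc b (b + θ)) + volume ({b + T} : Set ℝ) :=
        (measure_mono hsub).trans (measure_union_le _ _)
    _ = ENNReal.ofReal θ := by
        rw [Real.volume_Ioc, Real.volume_singleton, add_zero, add_sub_cancel_left]

theorem ENNReal.ofReal_mul_ofReal_le (p q : ℝ) :
    ENNReal.ofReal p * ENNReal.ofReal q ≤ ENNReal.ofReal (p * q) := by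
  rcases le_total 0 p with hp | hp
  · rw [ENNReal.ofReal_mul hp]
  · simp [ENNReal.ofReal_of_nonpos hp]

theorem sector_angle_median_below_general (x : ℂ) (ρ : ℝ)
    (u : ℂ → ℝ) (hu : Continuous u) (a β θ : ℝ) (hθ : θ ≤ π/2)
    (hout : ∀ ψ ∈ Ioo (β + θ) (β + 2*π), u (circleMap x ρ ψ) < a) :
    ENNReal.ofReal ρ * volume {ψ ∈ Ioc β (β + 2*π) | a < u (circleMap x ρ ψ)}
        ≤ ENNReal.ofReal (θ * ρ) ∧
      ∀ m : ℝ, IsCircleMedian x ρ u m → m < a := by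
  refine ⟨?_, fun m hm => ?_⟩
  · calc ENNReal.ofReal ρ * volume {ψ ∈ Ioc β (β + 2*π) | a < u (circleMap x ρ ψ)}
        ≤ ENNReal.ofReal ρ * ENNReal.ofReal θ := by
          gcongr
          exact volume_sep_Ioc_le_of_forall_Ioo_not fun ψ hψ => (hout ψ hψ).not_gt
      _ ≤ ENNReal.ofReal (θ * ρ) := mul_comm θ ρ ▸ ENNReal.ofReal_mul_ofReal_le ρ θ
  · by_contra! ham
    have hmeas : Measurable (u ∘ circleMap x ρ) :=
      (hu.comp (continuous_circleMap x ρ)).measurable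
    have hhalf : volume (Ioc (0:ℝ) (2*π)) / 2 = ENNReal.ofReal π := by
      rw [Real.volume_Ioc, sub_zero, ← ENNReal.ofReal_ofNat 2,
        ← ENNReal.ofReal_div_of_pos two_pos, mul_div_cancel_left₀ π two_ne_zero]
    have hθπ : ENNReal.ofReal θ < ENNReal.ofReal π :=
      (ENNReal.ofReal_lt_ofReal_iff pi_pos).2 (by linarith [pi_pos])
    refine hθπ.not_ge ?_
    calc ENNReal.ofReal π
        ≤ volume {ψ ∈ Ioc (0:ℝ) (2*π) | u (circleMap x ρ ψ) ∈ Ici m} := hhalf ▸ hm.1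
      _ = volume {ψ ∈ Ioc β (β + 2*π) | u (circleMap x ρ ψ) ∈ Ici m} := by
          simpa only [zero_add, Function.comp_apply] using
            ((periodic_circleMap x ρ).comp u).volume_preimage_inter_Ioc_eq two_pi_pos hmeas
              measurableSet_Ici 0 β
      _ ≤ ENNReal.ofReal θ := volume_sep_Ioc_le_of_forall_Ioo_not fun ψ hψ hmψ =>
          (hout ψ hψ).not_ge (ham.trans hmψ)

theorem sector_angle_median_below (x : ℂ) (ρ : ℝ) (hρ : 0 < ρ)
    (u : ℂ → ℝ) (hu : Continuous u) (a β θ : ℝ) (hθ0 : 0 < θ) (hθ : θ ≤ π/2)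
    (hseg : ∀ t : ℝ, 0 ≤ t → t ≤ ρ →
      u (x + t • circleMap 0 1 β) = a ∧ u (x + t • circleMap 0 1 (β + θ)) = a)
    (hin : ∀ ψ ∈ Ioo β (β + θ), a < u (circleMap x ρ ψ))
    (hout : ∀ ψ ∈ Ioo (β + θ) (β + 2*π), u (circleMap x ρ ψ) < a) :
    ENNReal.ofReal ρ * volume {ψ ∈ Ioc β (β + 2*π) | a < u (circleMap x ρ ψ)}
        ≤ ENNReal.ofReal (θ * ρ) ∧
      ∀ m : ℝ, IsCircleMedian x ρ u m → m < a :=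
  sector_angle_median_below_general x ρ u hu a β θ hθ hout
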